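/- arXiv:1812.07545 — 2 statements merged into one kernel-verified Lean document; each statement's English description precedes it below -/
import Mathlib

section
/- Let α, β, p, q, k > 0 with kp < 1 and kq > 1. Then the improper integral ∫₀^∞ (α z^p + β z^q)^{-k} dz converges and equals Γ((1-kp)/(q-p))·Γ((kq-1)/(q-p)) / (α^k·Γ(k)·(q-p)) · (α/β)^((1-kp)/(q-p)). -/
/-!
Rescaling `z = (α / β) ^ (1 / (q - p)) * w` makes the two coefficients equal, and the
substitution `w = u ^ (1 / (q - p))` turns `∫₀^∞ (w ^ p + w ^ q) ^ (-k) dw` into `(q - p)⁻¹`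
times `∫₀^∞ u ^ (a - 1) (1 + u) ^ (-(a + b)) du`, where `a = (1 - k p) / (q - p)` and
`b = (k q - 1) / (q - p)` are positive with `a + b = k`. Finally `t = u / (1 + u)` identifies
this with Euler's Beta integral `Γ(a) Γ(b) / Γ(k)`.
-/

open MeasureTheory Set Real

section Beta

variable {a b : ℝ}

lemma ofReal_rpow_mul_one_sub_rpow {t : ℝ} (ht : t ∈ Icc 0 1) :
    ((t ^ (a - 1) * (1 - t) ^ (b - 1) : ℝ) : ℂ) =
      (t : ℂ) ^ ((a : ℂ) - 1) * (1 - (t : ℂ)) ^ ((b : ℂ) - 1) := by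
  rw [Complex.ofReal_mul, Complex.ofReal_cpow ht.1, Complex.ofReal_cpow (sub_nonneg.2 ht.2)]
  push_cast
  rfl

lemma betaIntegral_ofReal :
    Complex.betaIntegral a b =
      ((∫ t in (0 : ℝ)..1, t ^ (a - 1) * (1 - t) ^ (b - 1) : ℝ) : ℂ) := by
  rw [← intervalIntegral.integral_ofReal, Complex.betaIntegral]
  refine intervalIntegral.integral_congr fun t ht => ?_
  rw [uIcc_of_le zero_le_one] at ht
  exact (ofReal_rpow_mul_one_sub_rpow ht).symm

lemma intervalIntegrable_rpow_mul_one_sub_rpow (ha : 0 < a) (hb : 0 < b) :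
    IntervalIntegrable (fun t : ℝ => t ^ (a - 1) * (1 - t) ^ (b - 1)) volume 0 1 := by
  have h := (Complex.betaIntegral_convergent (u := a) (v := b) (by simpa) (by simpa)).norm
  refine h.congr fun t ht => ?_
  rw [uIoc_of_le zero_le_one] at ht
  rw [← ofReal_rpow_mul_one_sub_rpow (Ioc_subset_Icc_self ht), Complex.norm_real,
    Real.norm_of_nonneg (mul_nonneg (rpow_nonneg ht.1.le _) (rpow_nonneg (sub_nonneg.2 ht.2) _))]

lemma integral_rpow_mul_one_sub_rpow (ha : 0 < a) (hb : 0 < b) :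
    ∫ t in (0 : ℝ)..1, t ^ (a - 1) * (1 - t) ^ (b - 1) = Gamma a * Gamma b / Gamma (a + b) := by
  have h := ProbabilityTheory.beta_eq_betaIntegralReal a b ha hb
  rw [betaIntegral_ofReal, Complex.ofReal_re] at h
  exact h.symm

lemma image_div_one_add_Ioi : (fun u : ℝ => u / (1 + u)) '' Ioi 0 = Ioo 0 1 := by
  ext t
  constructor
  · rintro ⟨u, hu : 0 < u, rfl⟩
    exact ⟨by positivity, (div_lt_one (by positivity)).2 (by linarith)⟩
  · rintro ⟨ht0, ht1⟩
    have h1t : 0 < 1 - t := sub_pos.2 ht1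
    refine ⟨t / (1 - t), div_pos ht0 h1t, ?_⟩
    field_simp
    ring

lemma injOn_div_one_add_Ioi : InjOn (fun u : ℝ => u / (1 + u)) (Ioi 0) := by
  intro u (hu : 0 < u) v (hv : 0 < v) huv
  rw [div_eq_div_iff (by positivity) (by positivity)] at huv
  linarith

lemma hasDerivAt_div_one_add {u : ℝ} (hu : 1 + u ≠ 0) :
    HasDerivAt (fun u : ℝ => u / (1 + u)) ((1 + u) ^ 2)⁻¹ u := by
  have h := (hasDerivAt_id' u).div ((hasDerivAt_id' u).const_add 1) hu
  rw [one_mul, mul_one, add_sub_cancel_right, one_div] at h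
  exact h

lemma inv_sq_one_add_mul_rpow_div_one_add {u : ℝ} (hu : 0 < u) :
    ((1 + u) ^ 2)⁻¹ * ((u / (1 + u)) ^ (a - 1) * (1 - u / (1 + u)) ^ (b - 1)) =
      u ^ (a - 1) * (1 + u) ^ (-(a + b)) := by
  have hw : 0 < 1 + u := by positivity
  have h1 : 1 - u / (1 + u) = (1 + u)⁻¹ := by field_simp; ring
  have hpow : (1 + u) ^ (a + b) = (1 + u) ^ (a - 1) * (1 + u) ^ (b - 1) * (1 + u) ^ 2 := by
    rw [← rpow_natCast, ← rpow_add hw, ← rpow_add hw]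
    ring_nf
  rw [h1, div_rpow hu.le hw.le, inv_rpow hw.le, rpow_neg hw.le, hpow]
  field_simp

lemma hasDerivWithinAt_div_one_add_Ioi {u : ℝ} (hu : u ∈ Ioi 0) :
    HasDerivWithinAt (fun u : ℝ => u / (1 + u)) ((1 + u) ^ 2)⁻¹ (Ioi 0) u :=
  (hasDerivAt_div_one_add (add_pos one_pos hu).ne').hasDerivWithinAt

lemma integrableOn_rpow_mul_one_add_rpow_neg (ha : 0 < a) (hb : 0 < b) :
    IntegrableOn (fun u : ℝ => u ^ (a - 1) * (1 + u) ^ (-(a + b))) (Ioi 0) := by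
  have h := (intervalIntegrable_iff_integrableOn_Ioo_of_le zero_le_one).mp
    (intervalIntegrable_rpow_mul_one_sub_rpow ha hb)
  rw [← image_div_one_add_Ioi,
    integrableOn_image_iff_integrableOn_abs_deriv_smul measurableSet_Ioi
      (fun _ => hasDerivWithinAt_div_one_add_Ioi) injOn_div_one_add_Ioi] at h
  refine h.congr_fun (fun u (hu : 0 < u) => ?_) measurableSet_Ioi
  dsimp only
  rw [smul_eq_mul, abs_of_pos (by positivity), inv_sq_one_add_mul_rpow_div_one_add hu]

lemma integral_rpow_mul_one_add_rpow_neg (ha : 0 < a) (hb : 0 < b) :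
    ∫ u in Ioi (0 : ℝ), u ^ (a - 1) * (1 + u) ^ (-(a + b)) =
      Gamma a * Gamma b / Gamma (a + b) := by
  rw [← integral_rpow_mul_one_sub_rpow ha hb, intervalIntegral.integral_of_le zero_le_one,
    integral_Ioc_eq_integral_Ioo, ← image_div_one_add_Ioi,
    integral_image_eq_integral_abs_deriv_smul measurableSet_Ioi
      (fun _ => hasDerivWithinAt_div_one_add_Ioi) injOn_div_one_add_Ioi]
  refine setIntegral_congr_fun measurableSet_Ioi fun u (hu : 0 < u) => ?_
  rw [smul_eq_mul, abs_of_pos (by positivity), inv_sq_one_add_mul_rpow_div_one_add hu]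

end Beta

section Scaling

variable {α β p q k : ℝ}

lemma mul_div_rpow_inv_sub_rpow (hα : 0 < α) (hβ : 0 < β) (hpq : p ≠ q) :
    β * ((α / β) ^ (q - p)⁻¹) ^ q = α * ((α / β) ^ (q - p)⁻¹) ^ p := by
  have hc : ((α / β) ^ (q - p)⁻¹) ^ (q - p) = α / β :=
    rpow_inv_rpow (by positivity) (sub_ne_zero.2 hpq.symm)
  rw [← add_sub_cancel p q, rpow_add (by positivity), add_sub_cancel_left, hc]
  field_simp

lemma mul_rpow_add_mul_rpow_mul_left_rpow_neg (hα : 0 < α) {c x : ℝ} (hc : 0 < c) (hx : 0 ≤ x)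
    (h : β * c ^ q = α * c ^ p) :
    (α * (c * x) ^ p + β * (c * x) ^ q) ^ (-k) =
      (α * c ^ p) ^ (-k) * (x ^ p + x ^ q) ^ (-k) := by
  have hsum : α * (c * x) ^ p + β * (c * x) ^ q = α * c ^ p * (x ^ p + x ^ q) := by
    rw [mul_rpow hc.le hx, mul_rpow hc.le hx]
    linear_combination x ^ q * h
  rw [hsum, mul_rpow (by positivity) (by positivity)]

lemma mul_rpow_mul_rpow_rpow_neg (hα : 0 < α) (hβ : 0 < β) :
    (α / β) ^ (q - p)⁻¹ * (α * ((α / β) ^ (q - p)⁻¹) ^ p) ^ (-k) =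
      α ^ (-k) * (α / β) ^ ((1 - k * p) / (q - p)) := by
  have hαβ : 0 < α / β := by positivity
  rw [mul_rpow hα.le (by positivity), ← rpow_mul (by positivity), ← rpow_mul hαβ.le,
    mul_left_comm, ← rpow_add hαβ]
  congr 2
  ring

lemma integrableOn_mul_rpow_add_mul_rpow_rpow_neg_iff (hα : 0 < α) (hβ : 0 < β)
    (hpq : p ≠ q) :
    IntegrableOn (fun z : ℝ => (α * z ^ p + β * z ^ q) ^ (-k)) (Ioi 0) ↔
      IntegrableOn (fun w : ℝ => (w ^ p + w ^ q) ^ (-k)) (Ioi 0) := by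
  have hcq := mul_div_rpow_inv_sub_rpow hα hβ hpq
  set c := (α / β) ^ (q - p)⁻¹
  have hc : 0 < c := by positivity
  have hscale := integrableOn_Ioi_comp_mul_left_iff
    (fun z : ℝ => (α * z ^ p + β * z ^ q) ^ (-k)) 0 hc
  rw [mul_zero] at hscale
  rw [← hscale]
  refine (integrableOn_congr_fun (fun x (hx : 0 < x) => ?_) measurableSet_Ioi).trans
    (integrable_const_mul_iff (rpow_pos_of_pos (by positivity : 0 < α * c ^ p) (-k)).ne'.isUnit _)
  exact mul_rpow_add_mul_rpow_mul_left_rpow_neg hα hc hx.le hcq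

lemma integral_mul_rpow_add_mul_rpow_rpow_neg (hα : 0 < α) (hβ : 0 < β) (hpq : p ≠ q) :
    ∫ z in Ioi (0 : ℝ), (α * z ^ p + β * z ^ q) ^ (-k) =
      α ^ (-k) * (α / β) ^ ((1 - k * p) / (q - p)) *
        ∫ w in Ioi (0 : ℝ), (w ^ p + w ^ q) ^ (-k) := by
  have hcq := mul_div_rpow_inv_sub_rpow hα hβ hpq
  set c := (α / β) ^ (q - p)⁻¹
  have hc : 0 < c := by positivity
  have hscale := integral_comp_mul_left_Ioi' (fun z : ℝ => (α * z ^ p + β * z ^ q) ^ (-k)) 0 hc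
  rw [mul_zero] at hscale
  rw [← hscale, smul_eq_mul, setIntegral_congr_fun measurableSet_Ioi fun x (hx : 0 < x) =>
      mul_rpow_add_mul_rpow_mul_left_rpow_neg (k := k) hα hc hx.le hcq,
    integral_const_mul, ← mul_assoc, mul_rpow_mul_rpow_rpow_neg hα hβ]

end Scaling

section PowerSum

variable {p q k : ℝ}

lemma one_sub_mul_div_add_mul_sub_one_div (hpq : p ≠ q) :
    (1 - k * p) / (q - p) + (k * q - 1) / (q - p) = k := by
  field_simp [sub_ne_zero.2 hpq.symm]
  ring

lemma rpow_sub_one_mul_rpow_add_rpow_rpow_neg (hpq : p ≠ q) {u : ℝ} (hu : 0 < u) :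
    u ^ ((q - p)⁻¹ - 1) * ((u ^ (q - p)⁻¹) ^ p + (u ^ (q - p)⁻¹) ^ q) ^ (-k) =
      u ^ ((1 - k * p) / (q - p) - 1) *
        (1 + u) ^ (-((1 - k * p) / (q - p) + (k * q - 1) / (q - p))) := by
  have hqp : q - p ≠ 0 := sub_ne_zero.2 hpq.symm
  have hsum :
      (u ^ (q - p)⁻¹) ^ p + (u ^ (q - p)⁻¹) ^ q = u ^ ((q - p)⁻¹ * p) * (1 + u) := by
    have hq : (q - p)⁻¹ * q = (q - p)⁻¹ * p + 1 := by field_simp; ring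
    rw [← rpow_mul hu.le, ← rpow_mul hu.le, hq, rpow_add hu, rpow_one]
    ring
  rw [hsum, mul_rpow (by positivity) (by positivity), ← rpow_mul hu.le, ← mul_assoc,
    ← rpow_add hu, one_sub_mul_div_add_mul_sub_one_div hpq]
  congr 2
  field_simp
  ring

lemma lt_of_mul_lt_one_of_one_lt_mul (hk : 0 < k) (hkp : k * p < 1) (hkq : 1 < k * q) : p < q :=
  lt_of_mul_lt_mul_left (hkp.trans hkq) hk.le

lemma integrableOn_rpow_add_rpow_rpow_neg (hk : 0 < k) (hkp : k * p < 1) (hkq : 1 < k * q) :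
    IntegrableOn (fun w : ℝ => (w ^ p + w ^ q) ^ (-k)) (Ioi 0) := by
  have hqp : 0 < q - p := sub_pos.2 (lt_of_mul_lt_one_of_one_lt_mul hk hkp hkq)
  rw [← integrableOn_Ioi_comp_rpow_iff' _ (inv_pos.2 hqp).ne']
  refine (integrableOn_rpow_mul_one_add_rpow_neg (div_pos (sub_pos.2 hkp) hqp)
    (div_pos (sub_pos.2 hkq) hqp)).congr_fun (fun u (hu : 0 < u) => ?_) measurableSet_Ioi
  exact (rpow_sub_one_mul_rpow_add_rpow_rpow_neg (sub_pos.1 hqp).ne hu).symm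

lemma integral_rpow_add_rpow_rpow_neg (hk : 0 < k) (hkp : k * p < 1) (hkq : 1 < k * q) :
    ∫ w in Ioi (0 : ℝ), (w ^ p + w ^ q) ^ (-k) =
      Gamma ((1 - k * p) / (q - p)) * Gamma ((k * q - 1) / (q - p)) / (Gamma k * (q - p)) := by
  have hqp : 0 < q - p := sub_pos.2 (lt_of_mul_lt_one_of_one_lt_mul hk hkp hkq)
  have hpq : p ≠ q := (sub_pos.1 hqp).ne
  rw [← integral_comp_rpow_Ioi_of_pos (inv_pos.2 hqp)]
  simp only [smul_eq_mul, mul_assoc]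
  rw [setIntegral_congr_fun measurableSet_Ioi fun u (hu : 0 < u) =>
      congrArg _ (rpow_sub_one_mul_rpow_add_rpow_rpow_neg hpq hu),
    integral_const_mul, integral_rpow_mul_one_add_rpow_neg (div_pos (sub_pos.2 hkp) hqp)
      (div_pos (sub_pos.2 hkq) hqp), one_sub_mul_div_add_mul_sub_one_div hpq]
  field_simp

end PowerSum

theorem integral_formula_gamma_general
    (α β p q k : ℝ) (hα : 0 < α) (hβ : 0 < β) (hk : 0 < k)
    (hkp : k * p < 1) (hkq : 1 < k * q) :
    MeasureTheory.IntegrableOn (fun z : ℝ => (α * z ^ p + β * z ^ q) ^ (-k))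
      (Set.Ioi (0:ℝ)) ∧
    (∫ z in Set.Ioi (0:ℝ), (α * z ^ p + β * z ^ q) ^ (-k)) =
      Real.Gamma ((1 - k * p) / (q - p)) * Real.Gamma ((k * q - 1) / (q - p)) /
        (α ^ k * Real.Gamma k * (q - p)) * (α / β) ^ ((1 - k * p) / (q - p)) := by
  have hpq : p ≠ q := (lt_of_mul_lt_one_of_one_lt_mul hk hkp hkq).ne
  refine ⟨(integrableOn_mul_rpow_add_mul_rpow_rpow_neg_iff hα hβ hpq).2
    (integrableOn_rpow_add_rpow_rpow_neg hk hkp hkq), ?_⟩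
  rw [integral_mul_rpow_add_mul_rpow_rpow_neg hα hβ hpq,
    integral_rpow_add_rpow_rpow_neg hk hkp hkq, rpow_neg hα.le]
  field_simp

/-- The improper integral `∫₀^∞ (α z^p + β z^q)^{-k} dz` converges and
equals `Γ((1-kp)/(q-p))·Γ((kq-1)/(q-p)) / (α^k·Γ(k)·(q-p)) · (α/β)^((1-kp)/(q-p))`. -/
theorem integral_formula_gamma
    (α β p q k : ℝ) (hα : 0 < α) (hβ : 0 < β) (hp : 0 < p) (hq : 0 < q) (hk : 0 < k)
    (hkp : k * p < 1) (hkq : 1 < k * q) :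
    MeasureTheory.IntegrableOn (fun z : ℝ => (α * z ^ p + β * z ^ q) ^ (-k))
      (Set.Ioi (0:ℝ)) ∧
    (∫ z in Set.Ioi (0:ℝ), (α * z ^ p + β * z ^ q) ^ (-k)) =
      Real.Gamma ((1 - k * p) / (q - p)) * Real.Gamma ((k * q - 1) / (q - p)) /
        (α ^ k * Real.Gamma k * (q - p)) * (α / β) ^ ((1 - k * p) / (q - p)) :=
  integral_formula_gamma_general α β p q k hα hβ hk hkp hkq
end

section
/- Let α, β, p, q, k > 0 with kp < 1 and kq > 1, let T_c > 0, let f : ℝⁿ → ℝⁿ with f(0) = 0, and let V : ℝⁿ → ℝ be continuously differentiable with V(0) = 0, V(x) > 0 for all x ≠ 0, and V radially unbounded (V(x) → ∞ as ‖x‖ → ∞). Suppose that for all x ≠ 0, ⟨∇V(x), f(x)⟩ ≤ -(γ(α,β,p,q,k)/T_c)·(α V(x)^p + β V(x)^q)^k. Then every solution x : [0,∞) → ℝⁿ of x'(t) = f(x(t)) satisfies x(t) = 0 for all t ≥ T_c; i.e., the origin is predefined-time stable with predefined time T_c. -/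
/-!
Along a solution, `g(t) = V(x(t))` is nonnegative and satisfies `g' ≤ -(γ/T_c) G(g)` with
`G(z) = (α z^p + β z^q)^k`, so `t ↦ (γ/T_c) t + ∫₀^{g(t)} dz / G(z)` is nonincreasing while `g > 0`.
Hence `g` vanishes no later than `T_c / γ · ∫₀^∞ dz / G(z)`, and this integral equals `γ`:
the substitution `z = (α/β)^{1/(q-p)} u^{1/(q-p)}` turns it into the Beta integral
`∫₀^∞ u^{s-1} (1+u)^{-(s+b)} du = B(s, b)` with `s = (1-kp)/(q-p)`, `b = (kq-1)/(q-p)`.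
-/

open Real Set MeasureTheory

theorem integral_rpow_mul_one_sub_rpow_eq_beta {s t : ℝ} (hs : 0 < s) (ht : 0 < t) :
    ∫ x in (0 : ℝ)..1, x ^ (s - 1) * (1 - x) ^ (t - 1) = ProbabilityTheory.beta s t := by
  have hB : Complex.betaIntegral s t = ↑(∫ x in (0 : ℝ)..1, x ^ (s - 1) * (1 - x) ^ (t - 1)) := by
    rw [Complex.betaIntegral, ← intervalIntegral.integral_ofReal]
    refine intervalIntegral.integral_congr fun x hx => ?_
    rw [uIcc_of_le zero_le_one] at hx
    push_cast
    rw [Complex.ofReal_cpow hx.1, Complex.ofReal_cpow (sub_nonneg.2 hx.2)]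
    push_cast
    rfl
  rw [ProbabilityTheory.beta_eq_betaIntegralReal s t hs ht, hB, Complex.ofReal_re]

theorem integral_Ioi_rpow_mul_one_add_rpow_neg_eq_beta {s t : ℝ} (hs : 0 < s) (ht : 0 < t) :
    ∫ u in Ioi (0 : ℝ), u ^ (s - 1) * (1 + u) ^ (-(s + t)) = ProbabilityTheory.beta s t := by
  have hderiv : ∀ u ∈ Ioi (0 : ℝ),
      HasDerivWithinAt (fun u => u / (1 + u)) (((1 + u) ^ 2)⁻¹) (Ioi 0) u := by
    intro u hu
    have h1 : 1 + u ≠ 0 := by linarith [mem_Ioi.mp hu]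
    have h : HasDerivAt (fun u : ℝ => u / (1 + u)) ((1 * (1 + u) - u * 1) / (1 + u) ^ 2) u :=
      (hasDerivAt_id' u).div ((hasDerivAt_id' u).const_add 1) h1
    exact (h.congr_deriv (by ring)).hasDerivWithinAt
  have hinj : InjOn (fun u : ℝ => u / (1 + u)) (Ioi 0) := by
    intro a ha b hb h
    have := mem_Ioi.mp ha
    have := mem_Ioi.mp hb
    simp only at h
    rw [div_eq_div_iff (by positivity) (by positivity)] at h
    linarith
  have himg : (fun u : ℝ => u / (1 + u)) '' Ioi 0 = Ioo 0 1 := by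
    ext x
    constructor
    · rintro ⟨u, hu, rfl⟩
      have := mem_Ioi.mp hu
      exact ⟨by positivity, (div_lt_one (by positivity)).2 (by linarith)⟩
    · rintro ⟨hx0, hx1⟩
      refine ⟨x / (1 - x), div_pos hx0 (by linarith), ?_⟩
      have : 1 - x ≠ 0 := by linarith
      field_simp
      ring
  have hpt : ∀ u ∈ Ioi (0 : ℝ),
      |((1 + u) ^ 2)⁻¹| • ((u / (1 + u)) ^ (s - 1) * (1 - u / (1 + u)) ^ (t - 1)) =
        u ^ (s - 1) * (1 + u) ^ (-(s + t)) := by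
    intro u hu
    have hu : 0 < u := hu
    have h1 : 0 < 1 + u := by linarith
    have e : 1 - u / (1 + u) = (1 + u)⁻¹ := by field_simp; ring
    rw [e, smul_eq_mul, abs_of_pos (by positivity), div_rpow hu.le h1.le, inv_rpow h1.le,
      div_eq_mul_inv, ← rpow_neg h1.le, ← rpow_neg h1.le, ← rpow_two, ← rpow_neg h1.le]
    calc (1 + u) ^ (-2 : ℝ) * (u ^ (s - 1) * (1 + u) ^ (-(s - 1)) * (1 + u) ^ (-(t - 1)))
        = u ^ (s - 1) * ((1 + u) ^ (-2 : ℝ) * (1 + u) ^ (-(s - 1)) * (1 + u) ^ (-(t - 1))) := by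
          ring
      _ = u ^ (s - 1) * (1 + u) ^ (-(s + t)) := by
          rw [← rpow_add h1, ← rpow_add h1]
          congr 2
          ring
  rw [← integral_rpow_mul_one_sub_rpow_eq_beta hs ht, intervalIntegral.integral_of_le zero_le_one,
    integral_Ioc_eq_integral_Ioo, ← himg,
    integral_image_eq_integral_abs_deriv_smul measurableSet_Ioi hderiv hinj]
  exact (setIntegral_congr_fun measurableSet_Ioi hpt).symm

theorem integral_Ioi_inv_rpow_add_rpow_rpow {p q k : ℝ} (hpq : p < q) (hkp : k * p < 1)
    (hkq : 1 < k * q) :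
    ∫ w in Ioi (0 : ℝ), ((w ^ p + w ^ q) ^ k)⁻¹ =
      ProbabilityTheory.beta ((1 - k * p) / (q - p)) ((k * q - 1) / (q - p)) / (q - p) := by
  have hr : 0 < q - p := sub_pos.2 hpq
  have hs : 0 < (1 - k * p) / (q - p) := div_pos (by linarith) hr
  have hb : 0 < (k * q - 1) / (q - p) := div_pos (by linarith) hr
  have hsb : (1 - k * p) / (q - p) + (k * q - 1) / (q - p) = k := by field_simp; ring
  have hpt : ∀ u ∈ Ioi (0 : ℝ),
      ((q - p)⁻¹ * u ^ ((q - p)⁻¹ - 1)) • (((u ^ (q - p)⁻¹) ^ p + (u ^ (q - p)⁻¹) ^ q) ^ k)⁻¹ =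
        (q - p)⁻¹ * (u ^ ((1 - k * p) / (q - p) - 1) * (1 + u) ^ (-k)) := by
    intro u hu
    have hu : 0 < u := hu
    have hsum : (u ^ (q - p)⁻¹) ^ p + (u ^ (q - p)⁻¹) ^ q = u ^ (p / (q - p)) * (1 + u) := by
      rw [← rpow_mul hu.le, ← rpow_mul hu.le, show (q - p)⁻¹ * q = p / (q - p) + 1 by
        field_simp; ring, rpow_add hu, rpow_one, inv_mul_eq_div]
      ring
    rw [hsum, mul_rpow (by positivity) (by positivity), ← rpow_mul hu.le, mul_inv,
      ← rpow_neg hu.le, ← rpow_neg (by positivity), smul_eq_mul]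
    calc (q - p)⁻¹ * u ^ ((q - p)⁻¹ - 1) * (u ^ (-(p / (q - p) * k)) * (1 + u) ^ (-k))
        = (q - p)⁻¹ * (u ^ ((q - p)⁻¹ - 1) * u ^ (-(p / (q - p) * k)) * (1 + u) ^ (-k)) := by
          ring
      _ = _ := by
          rw [← rpow_add hu]
          congr 3
          field_simp
          ring
  have hbeta := integral_Ioi_rpow_mul_one_add_rpow_neg_eq_beta hs hb
  rw [hsb] at hbeta
  rw [← integral_comp_rpow_Ioi_of_pos (inv_pos.2 hr), setIntegral_congr_fun measurableSet_Ioi hpt,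
    integral_const_mul, hbeta, inv_mul_eq_div]

noncomputable def predefinedTimeConstant (α β p q k : ℝ) : ℝ :=
  Real.Gamma ((1 - k * p) / (q - p)) * Real.Gamma ((k * q - 1) / (q - p)) /
    (α ^ k * Real.Gamma k * (q - p)) * (α / β) ^ ((1 - k * p) / (q - p))

theorem predefinedTimeConstant_pos {α β p q k : ℝ} (hα : 0 < α) (hβ : 0 < β) (hpq : p < q)
    (hkp : k * p < 1) (hkq : 1 < k * q) : 0 < predefinedTimeConstant α β p q k := by
  have hr : 0 < q - p := sub_pos.2 hpq
  have : 0 < (1 - k * p) / (q - p) := div_pos (by linarith) hr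
  have : 0 < (k * q - 1) / (q - p) := div_pos (by linarith) hr
  have : 0 < k := by nlinarith
  unfold predefinedTimeConstant
  positivity

theorem integral_Ioi_inv_mul_rpow_add_mul_rpow_rpow_eq {α β p q k : ℝ} (hα : 0 < α) (hβ : 0 < β)
    (hpq : p < q) (hkp : k * p < 1) (hkq : 1 < k * q) :
    ∫ z in Ioi (0 : ℝ), ((α * z ^ p + β * z ^ q) ^ k)⁻¹ = predefinedTimeConstant α β p q k := by
  have hr : 0 < q - p := sub_pos.2 hpq
  set C := (α / β) ^ (q - p)⁻¹ with hC_def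
  have hC : 0 < C := by positivity
  have hCq : β * C ^ q = α * C ^ p := by
    have hCr : C ^ (q - p) = α / β := by
      rw [hC_def, ← rpow_mul (by positivity), inv_mul_cancel₀ hr.ne', rpow_one]
    rw [show q = p + (q - p) by ring, rpow_add hC, hCr]
    field_simp
  have hscale : ∀ w ∈ Ioi (0 : ℝ), ((α * (C * w) ^ p + β * (C * w) ^ q) ^ k)⁻¹ =
      (α * C ^ p) ^ (-k) * ((w ^ p + w ^ q) ^ k)⁻¹ := by
    intro w hw
    have hw : 0 < w := hw
    rw [mul_rpow hC.le hw.le, mul_rpow hC.le hw.le, ← mul_assoc, ← mul_assoc, hCq, ← mul_add,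
      mul_rpow (by positivity) (by positivity), mul_inv, rpow_neg (by positivity)]
  have hsb : (1 - k * p) / (q - p) + (k * q - 1) / (q - p) = k := by field_simp; ring
  have hconst : C * (α * C ^ p) ^ (-k) = (α ^ k)⁻¹ * (α / β) ^ ((1 - k * p) / (q - p)) := by
    rw [mul_rpow hα.le (by positivity), rpow_neg hα.le, ← rpow_mul hC.le, mul_left_comm,
      ← rpow_one_add' hC.le (by linarith), hC_def, ← rpow_mul (by positivity)]
    congr 2
    field_simp
    ring
  calc ∫ z in Ioi (0 : ℝ), ((α * z ^ p + β * z ^ q) ^ k)⁻¹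
      = C * ∫ w in Ioi (0 : ℝ), ((α * (C * w) ^ p + β * (C * w) ^ q) ^ k)⁻¹ := by
        rw [← smul_eq_mul,
          integral_comp_mul_left_Ioi' (fun z => ((α * z ^ p + β * z ^ q) ^ k)⁻¹) 0 hC, mul_zero]
    _ = C * (α * C ^ p) ^ (-k) * (ProbabilityTheory.beta ((1 - k * p) / (q - p))
          ((k * q - 1) / (q - p)) / (q - p)) := by
        rw [setIntegral_congr_fun measurableSet_Ioi hscale, integral_const_mul,
          integral_Ioi_inv_rpow_add_rpow_rpow hpq hkp hkq, mul_assoc]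
    _ = predefinedTimeConstant α β p q k := by
        rw [hconst, ProbabilityTheory.beta, hsb, predefinedTimeConstant]
        simp only [div_eq_mul_inv, mul_inv]
        ring

section FiniteTimeExtinction

variable {g g' G : ℝ → ℝ} {c : ℝ}

theorem antitoneOn_Ici_of_nonneg_of_deriv_nonpos_of_pos
    (hg : ∀ t, 0 ≤ t → HasDerivAt g (g' t) t) (hg_nonneg : ∀ t, 0 ≤ t → 0 ≤ g t)
    (hdec : ∀ t, 0 < t → 0 < g t → g' t ≤ 0) : AntitoneOn g (Ici 0) := by
  refine antitoneOn_of_hasDerivWithinAt_nonpos (convex_Ici 0)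
    (fun t ht => (hg t ht).continuousAt.continuousWithinAt)
    (fun t ht => (hg t (interior_subset ht)).hasDerivWithinAt) fun t ht => ?_
  rw [interior_Ici, mem_Ioi] at ht
  rcases (hg_nonneg t ht.le).lt_or_eq with hpos | hzero
  · exact hdec t ht hpos
  · have hmin : IsLocalMin g t := by
      filter_upwards [Ioi_mem_nhds ht] with s hs
      rw [← hzero]
      exact hg_nonneg s (le_of_lt hs)
    exact (hmin.hasDerivAt_eq_zero (hg t ht.le)).le

theorem mul_sub_le_sub_comp_of_hasDerivAt_le_neg_mul {Φ : ℝ → ℝ} {a b : ℝ} (hab : a ≤ b)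
    (hΦ : ∀ v, 0 < v → HasDerivAt Φ (G v)⁻¹ v) (hGpos : ∀ z, 0 < z → 0 < G z)
    (hg : ∀ t ∈ Icc a b, HasDerivAt g (g' t) t) (hg_pos : ∀ t ∈ Icc a b, 0 < g t)
    (hdec : ∀ t ∈ Icc a b, g' t ≤ -c * G (g t)) :
    c * (b - a) ≤ Φ (g a) - Φ (g b) := by
  have hderiv : ∀ t ∈ Icc a b,
      HasDerivAt (fun t => c * t + Φ (g t)) (c + (G (g t))⁻¹ * g' t) t := fun t ht =>
    ((hasDerivAt_id' t).const_mul c |>.congr_deriv (mul_one c)).add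
      ((hΦ _ (hg_pos t ht)).comp t (hg t ht))
  have hanti : AntitoneOn (fun t => c * t + Φ (g t)) (Icc a b) := by
    refine antitoneOn_of_hasDerivWithinAt_nonpos (convex_Icc a b)
      (fun t ht => (hderiv t ht).continuousAt.continuousWithinAt)
      (fun t ht => (hderiv t (interior_subset ht)).hasDerivWithinAt) fun t ht => ?_
    have ht := interior_subset ht
    have hG := hGpos _ (hg_pos t ht)
    calc c + (G (g t))⁻¹ * g' t ≤ c + (G (g t))⁻¹ * (-c * G (g t)) := by
          gcongr
          exact hdec t ht
      _ = 0 := by field_simp; ring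
  have := hanti (left_mem_Icc.2 hab) (right_mem_Icc.2 hab) hab
  linarith

theorem hasDerivAt_integral_inv {v : ℝ} (hv : 0 < v) (hG : ContinuousOn G (Ioi 0))
    (hGpos : ∀ z, 0 < z → 0 < G z) (hint : IntegrableOn (fun z => (G z)⁻¹) (Ioi 0)) :
    HasDerivAt (fun v => ∫ z in (0 : ℝ)..v, (G z)⁻¹) (G v)⁻¹ v := by
  have hcont : ContinuousOn (fun z => (G z)⁻¹) (Ioi 0) :=
    hG.inv₀ fun z hz => (hGpos z hz).ne'
  refine intervalIntegral.integral_hasDerivAt_right ?_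
    (hcont.stronglyMeasurableAtFilter isOpen_Ioi v hv) (hcont.continuousAt (Ioi_mem_nhds hv))
  rw [intervalIntegrable_iff_integrableOn_Ioc_of_le hv.le]
  exact hint.mono_set Ioc_subset_Ioi_self

theorem eq_zero_of_hasDerivAt_le_neg_mul (hc : 0 < c) (hG : ContinuousOn G (Ioi 0))
    (hGpos : ∀ z, 0 < z → 0 < G z) (hint : IntegrableOn (fun z => (G z)⁻¹) (Ioi 0))
    (hg : ∀ t, 0 ≤ t → HasDerivAt g (g' t) t) (hg_nonneg : ∀ t, 0 ≤ t → 0 ≤ g t)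
    (hdec : ∀ t, 0 ≤ t → 0 < g t → g' t ≤ -c * G (g t)) {t : ℝ}
    (ht : (∫ z in Ioi 0, (G z)⁻¹) / c ≤ t) : g t = 0 := by
  set T := (∫ z in Ioi 0, (G z)⁻¹) / c
  have hT : 0 ≤ T :=
    div_nonneg (setIntegral_nonneg measurableSet_Ioi fun z hz => (inv_pos.2 (hGpos z hz)).le)
      hc.le
  have hanti : AntitoneOn g (Ici 0) :=
    antitoneOn_Ici_of_nonneg_of_deriv_nonpos_of_pos hg hg_nonneg fun s hs hpos =>
      (hdec s hs.le hpos).trans (by nlinarith [hGpos _ hpos])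
  suffices hgT : g T = 0 by
    have := hanti (mem_Ici.2 hT) (mem_Ici.2 (hT.trans ht)) ht
    linarith [hg_nonneg t (hT.trans ht)]
  by_contra hne
  have hgT : 0 < g T := (hg_nonneg T hT).lt_of_ne' hne
  have hg_pos : ∀ s ∈ Icc 0 T, 0 < g s := fun s hs =>
    hgT.trans_le (hanti (mem_Ici.2 hs.1) (mem_Ici.2 hT) hs.2)
  have hcomp := mul_sub_le_sub_comp_of_hasDerivAt_le_neg_mul hT
    (fun v hv => hasDerivAt_integral_inv hv hG hGpos hint) hGpos
    (fun s hs => hg s hs.1) hg_pos (fun s hs => hdec s hs.1 (hg_pos s hs))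
  have hΦ0 : ∫ z in (0 : ℝ)..g 0, (G z)⁻¹ ≤ ∫ z in Ioi 0, (G z)⁻¹ := by
    rw [intervalIntegral.integral_of_le (hg_pos 0 ⟨le_rfl, hT⟩).le]
    exact setIntegral_mono_set hint
      (ae_restrict_of_forall_mem measurableSet_Ioi fun z hz => (inv_pos.2 (hGpos z hz)).le)
      Ioc_subset_Ioi_self.eventuallyLE
  have hΦT : 0 < ∫ z in (0 : ℝ)..g T, (G z)⁻¹ := by
    refine intervalIntegral.intervalIntegral_pos_of_pos_on ?_
      (fun z hz => inv_pos.2 (hGpos z hz.1)) hgT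
    rw [intervalIntegrable_iff_integrableOn_Ioc_of_le hgT.le]
    exact hint.mono_set Ioc_subset_Ioi_self
  have hcT : c * (T - 0) = ∫ z in Ioi 0, (G z)⁻¹ := by
    rw [sub_zero]; exact mul_div_cancel₀ _ hc.ne'
  linarith

end FiniteTimeExtinction

open RealInnerProductSpace

theorem lyapunov_predefined_time_stability_general
    (n : ℕ)
    (α β p q k : ℝ) (hα : 0 < α) (hβ : 0 < β) (hk : 0 < k)
    (hkp : k * p < 1) (hkq : 1 < k * q)
    (Tc : ℝ) (hTc : 0 < Tc)
    (f : EuclideanSpace ℝ (Fin n) → EuclideanSpace ℝ (Fin n))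
    (V : EuclideanSpace ℝ (Fin n) → ℝ)
    (hV1 : ContDiff ℝ 1 V)
    (hV0 : V 0 = 0)
    (hVpos : ∀ y, y ≠ 0 → 0 < V y)
    (hVdec : ∀ y, y ≠ 0 →
      ⟪gradient V y, f y⟫ ≤
        -(Real.Gamma ((1 - k * p) / (q - p)) * Real.Gamma ((k * q - 1) / (q - p)) /
            (α ^ k * Real.Gamma k * (q - p)) * (α / β) ^ ((1 - k * p) / (q - p)) / Tc) *
          (α * V y ^ p + β * V y ^ q) ^ k)
    (x : ℝ → EuclideanSpace ℝ (Fin n))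
    (hx : ∀ t, 0 ≤ t → HasDerivAt x (f (x t)) t) :
    ∀ t, Tc ≤ t → x t = 0 := by
  have hpq : p < q := by nlinarith
  set γ := predefinedTimeConstant α β p q k
  have hγ : 0 < γ := predefinedTimeConstant_pos hα hβ hpq hkp hkq
  have hγ_eq := integral_Ioi_inv_mul_rpow_add_mul_rpow_rpow_eq hα hβ hpq hkp hkq
  have hbase : ∀ z : ℝ, 0 < z → 0 < α * z ^ p + β * z ^ q := fun z hz => by positivity
  have hG : ContinuousOn (fun z : ℝ => (α * z ^ p + β * z ^ q) ^ k) (Ioi 0) := fun z hz =>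
    ((continuousAt_const.mul (continuousAt_rpow_const z p (Or.inl (ne_of_gt hz)))).add
      (continuousAt_const.mul (continuousAt_rpow_const z q (Or.inl (ne_of_gt hz))))).rpow_const
      (Or.inl (hbase z hz).ne') |>.continuousWithinAt
  have hV_nonneg : ∀ y, 0 ≤ V y := fun y => by
    rcases eq_or_ne y 0 with rfl | hy
    exacts [hV0.ge, (hVpos y hy).le]
  have hVx : ∀ t, 0 ≤ t → HasDerivAt (fun t => V (x t)) ⟪gradient V (x t), f (x t)⟫ t :=
    fun t ht => (hV1.differentiable one_ne_zero).differentiableAt.hasGradientAt.hasFDerivAt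
      |>.comp_hasDerivAt t (hx t ht)
  intro t ht
  by_contra hxt
  refine (hVpos _ hxt).ne' (eq_zero_of_hasDerivAt_le_neg_mul (div_pos hγ hTc) hG
    (fun z hz => rpow_pos_of_pos (hbase z hz) k) (.of_integral_ne_zero (hγ_eq ▸ hγ.ne')) hVx
    (fun s _ => hV_nonneg _) (fun s _ hpos => hVdec _ fun hs => by simp [hs, hV0] at hpos) ?_)
  rwa [hγ_eq, div_div_cancel₀ hγ.ne']

/-- Lyapunov characterization of predefined-time stability: if a C¹,
positive definite, radially unbounded function `V` satisfies
`⟨∇V(x), f(x)⟩ ≤ -(γ/T_c)(α V^p + β V^q)^k` away from the origin, then every solution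
of `x' = f(x)` reaches the origin before the predefined time `T_c`. -/
theorem lyapunov_predefined_time_stability
    (n : ℕ)
    (α β p q k : ℝ) (hα : 0 < α) (hβ : 0 < β) (hp : 0 < p) (hq : 0 < q) (hk : 0 < k)
    (hkp : k * p < 1) (hkq : 1 < k * q)
    (Tc : ℝ) (hTc : 0 < Tc)
    (f : EuclideanSpace ℝ (Fin n) → EuclideanSpace ℝ (Fin n)) (hf0 : f 0 = 0)
    (V : EuclideanSpace ℝ (Fin n) → ℝ)
    (hV1 : ContDiff ℝ 1 V)
    (hV0 : V 0 = 0)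
    (hVpos : ∀ y, y ≠ 0 → 0 < V y)
    (hVrad : ∀ M : ℝ, ∃ R : ℝ, ∀ y, R ≤ ‖y‖ → M ≤ V y)
    (hVdec : ∀ y, y ≠ 0 →
      ⟪gradient V y, f y⟫ ≤
        -(Real.Gamma ((1 - k * p) / (q - p)) * Real.Gamma ((k * q - 1) / (q - p)) /
            (α ^ k * Real.Gamma k * (q - p)) * (α / β) ^ ((1 - k * p) / (q - p)) / Tc) *
          (α * V y ^ p + β * V y ^ q) ^ k)
    (x : ℝ → EuclideanSpace ℝ (Fin n))
    (hx : ∀ t, 0 ≤ t → HasDerivAt x (f (x t)) t) :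
    ∀ t, Tc ≤ t → x t = 0 :=
  lyapunov_predefined_time_stability_general n α β p q k hα hβ hk hkp hkq Tc hTc f V hV1 hV0 hVpos
    hVdec x hx
end
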